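/- arXiv:2101.04150 — 2 statements merged into one kernel-verified Lean document; each statement's English description precedes it below -/
import Mathlib

section
/- The maximum number of nonzero entries in an n × n sign-restricted matrix equals (3n² − n)/4 if n ≡ 0 or 3 (mod 4), and (3n² − n + 2)/4 if n ≡ 1 or 2 (mod 4). -/
/-!
Column `j` of a sign-restricted matrix has at most `2j + 1` nonzero entries: every `-1` in
column `j` sits in a row whose prefix before `j` is positive, while the sum of all these row
prefixes is the sum of the first `j` column totals, hence at most `j`. A column without zeros
alternates `1, -1, 1, …`; two adjacent such columns would give every odd row a prefix `≥ 2`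
before them, which the same count forbids, so two adjacent columns carry at most `2n - 1`
nonzero entries. Bounding the columns left of the middle singly and the remaining ones in pairs
gives the bound, and it is attained by the checkerboard pattern on the cone `|i - n/2| ≤ j` with
the `-1`s of the top row deleted.
-/

open Finset

/-- A sign-restricted matrix: entries in {0,1,-1}, every partial column sum
(from row 1 down) equals 0 or 1, every partial row sum (from column 1) is nonnegative. -/
def IsSRM {m n : ℕ} (A : Matrix (Fin m) (Fin n) ℤ) : Prop :=
  (∀ i j, A i j = 0 ∨ A i j = 1 ∨ A i j = -1) ∧
  (∀ i j, (∑ k ∈ Finset.Iic i, A k j) = 0 ∨ (∑ k ∈ Finset.Iic i, A k j) = 1) ∧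
  (∀ i j, 0 ≤ ∑ l ∈ Finset.Iic j, A i l)

theorem Nat.sum_range_mod_two (t : ℕ) : ∑ k ∈ range t, k % 2 = t / 2 := by
  induction t with
  | zero => rfl
  | succ t ih => rw [sum_range_succ, ih]; omega

theorem Nat.sum_range_two_mul_add_one (t : ℕ) : ∑ k ∈ range t, (2 * k + 1) = t ^ 2 := by
  induction t with
  | zero => rfl
  | succ t ih => rw [sum_range_succ, ih]; ring

namespace Fin

variable {n : ℕ}

theorem Iio_eq_Iic_of_val_eq_succ {i k : Fin n} (h : i.val = k.val + 1) : Iio i = Iic k := by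
  ext l
  simp only [mem_Iio, mem_Iic, Fin.lt_def, Fin.le_def]
  omega

theorem sum_Iic_eq_sum_Iic_add {M : Type*} [AddCommMonoid M] (f : Fin n → M) {i k : Fin n}
    (h : i.val = k.val + 1) : ∑ l ∈ Iic i, f l = ∑ l ∈ Iic k, f l + f i := by
  rw [← Iio_insert, sum_insert notMem_Iio_self, Iio_eq_Iic_of_val_eq_succ h, add_comm]

theorem sum_Iic_eq_ite_of_ne_zero {f : Fin n → ℤ}
    (hf : ∀ i, ∑ k ∈ Iic i, f k = 0 ∨ ∑ k ∈ Iic i, f k = 1) (hne : ∀ i, f i ≠ 0) (i : Fin n) :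
    ∑ k ∈ Iic i, f k = if i.val % 2 = 0 then 1 else 0 := by
  obtain ⟨t, ht⟩ : ∃ t, i.val = t := ⟨_, rfl⟩
  induction t generalizing i with
  | zero =>
    have hi : Iic i = ({i} : Finset (Fin n)) := by
      ext k
      simp only [mem_Iic, mem_singleton, Fin.le_def, Fin.ext_iff]
      omega
    have h01 := hf i
    have := hne i
    rw [hi, sum_singleton] at h01 ⊢
    rw [ht]
    omega
  | succ t ih =>
    have hprev : ∑ k ∈ Iic (⟨t, by omega⟩ : Fin n), f k = if t % 2 = 0 then 1 else 0 := ih _ rfl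
    have h01 := hf i
    have := hne i
    rw [sum_Iic_eq_sum_Iic_add f (k := ⟨t, by omega⟩) ht] at h01 ⊢
    rw [hprev] at h01 ⊢
    rw [ht]
    split_ifs at h01 ⊢ <;> omega

theorem sum_Iic_eq_sum_range {M : Type*} [AddCommMonoid M] (f : ℕ → M) (i : Fin n) :
    ∑ k ∈ Iic i, f k = ∑ m ∈ range (i + 1), f m := by
  rw [← Nat.Iio_eq_range, Finset.Iio_add_one_eq_Iic, ← Fin.map_valEmbedding_Iic, sum_map]
  rfl

theorem card_filter_univ_val (p : ℕ → Prop) [DecidablePred p] :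
    #{i : Fin n | p i} = #{k ∈ range n | p k} := by
  rw [card_filter, card_filter, Fin.sum_univ_eq_sum_range (fun k => if p k then 1 else 0)]

theorem card_filter_val_mod_two_eq_one : #{i : Fin n | i.val % 2 = 1} = n / 2 := by
  rw [card_filter_univ_val (fun k => k % 2 = 1), card_filter, ← Nat.sum_range_mod_two]
  exact sum_congr rfl fun k _ => by split_ifs <;> omega

end Fin

theorem Matrix.card_ne_zero_eq_sum_card_col {ι κ R : Type*} [Fintype ι] [Fintype κ] [Zero R]
    [DecidableEq R] (A : Matrix ι κ R) :
    #{p : ι × κ | A p.1 p.2 ≠ 0} = ∑ j, #{i | A i j ≠ 0} := by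
  simp only [card_filter]
  rw [Fintype.sum_prod_type, sum_comm]

theorem Finset.sum_range_le_sum_range_of_pairs {M : Type*} [AddCommMonoid M] [PartialOrder M]
    [IsOrderedAddMonoid M] {c b : ℕ → M} {a p n : ℕ} (hn : a + 2 * p = n)
    (hsingle : ∀ j < a, c j ≤ b j)
    (hpair : ∀ k < p, c (a + 2 * k) + c (a + 2 * k + 1) ≤ b (a + 2 * k) + b (a + 2 * k + 1)) :
    ∑ j ∈ range n, c j ≤ ∑ j ∈ range n, b j := by
  subst hn
  induction p with
  | zero => exact sum_le_sum fun j hj => hsingle j (mem_range.1 hj)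
  | succ p ih =>
    rw [show a + 2 * (p + 1) = a + 2 * p + 1 + 1 by ring]
    rw [sum_range_succ c, sum_range_succ c, sum_range_succ b, sum_range_succ b,
      add_assoc (∑ j ∈ range _, c j), add_assoc (∑ j ∈ range _, b j)]
    exact add_le_add (ih fun k hk => hpair k (by omega)) (hpair p (by omega))

namespace IsSRM

variable {m n : ℕ} {A : Matrix (Fin m) (Fin n) ℤ}

theorem sum_col_le_one (hA : IsSRM A) (j : Fin n) : ∑ i, A i j ≤ 1 := by
  rcases m with _ | m
  · simp
  · rw [← Iic_top]
    rcases hA.2.1 ⊤ j with h | h <;> omega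

theorem sum_Iio_row_nonneg (hA : IsSRM A) (i : Fin m) (j : Fin n) :
    0 ≤ ∑ l ∈ Iio j, A i l := by
  obtain ⟨_ | k, hk⟩ := j
  · rw [show Iio (⟨0, hk⟩ : Fin n) = ∅ by ext l; simp [Fin.lt_def]]
    rfl
  · rw [Fin.Iio_eq_Iic_of_val_eq_succ (k := ⟨k, by omega⟩) rfl]
    exact hA.2.2 i _

theorem one_le_sum_Iio_row (hA : IsSRM A) {i : Fin m} {j : Fin n} (h : A i j = -1) :
    1 ≤ ∑ l ∈ Iio j, A i l := by
  have := hA.2.2 i j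
  rw [← Iio_insert, sum_insert notMem_Iio_self, h] at this
  omega

/-- Summing the row prefixes before column `j` over all rows gives the first `j` column totals. -/
theorem mul_card_le_of_le_sum_Iio (hA : IsSRM A) (j : Fin n) (S : Finset (Fin m)) (k : ℤ)
    (hS : ∀ i ∈ S, k ≤ ∑ l ∈ Iio j, A i l) : k * #S ≤ j := by
  calc k * #S = ∑ _i ∈ S, k := by rw [sum_const, nsmul_eq_mul, mul_comm]
    _ ≤ ∑ i ∈ S, ∑ l ∈ Iio j, A i l := sum_le_sum hS
    _ ≤ ∑ i, ∑ l ∈ Iio j, A i l :=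
      sum_le_sum_of_subset_of_nonneg (subset_univ S) fun i _ _ => hA.sum_Iio_row_nonneg i j
    _ = ∑ l ∈ Iio j, ∑ i, A i l := sum_comm
    _ ≤ ∑ _l ∈ Iio j, 1 := sum_le_sum fun l _ => hA.sum_col_le_one l
    _ = j := by simp

theorem card_col_ne_zero_le (hA : IsSRM A) (j : Fin n) : #{i | A i j ≠ 0} ≤ 2 * j + 1 := by
  have hneg : (#{i | A i j = -1} : ℤ) ≤ j := by
    simpa using hA.mul_card_le_of_le_sum_Iio j {i | A i j = -1} 1 fun i hi =>
      hA.one_le_sum_Iio_row (mem_filter.1 hi).2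
  -- a nonzero entry counts as `A i j` plus two if it is `-1`
  have hcount : (#{i | A i j ≠ 0} : ℤ) = ∑ i, A i j + 2 * #{i | A i j = -1} := by
    simp only [card_filter, Nat.cast_sum, mul_sum, ← sum_add_distrib]
    refine sum_congr rfl fun i _ => ?_
    rcases hA.1 i j with h | h | h <;> simp [h]
  have := hA.sum_col_le_one j
  omega

theorem eq_neg_one_of_col_ne_zero (hA : IsSRM A) {j : Fin n} (hfull : ∀ i, A i j ≠ 0)
    {i : Fin m} (hi : i.val % 2 = 1) : A i j = -1 := by
  have hstep :=
    Fin.sum_Iic_eq_sum_Iic_add (A · j) (i := i) (k := ⟨i - 1, by omega⟩) (by simp; omega)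
  simp only [Fin.sum_Iic_eq_ite_of_ne_zero (hA.2.1 · j) hfull] at hstep
  split_ifs at hstep <;> omega

theorem card_col_add_card_col_le (hA : IsSRM A) {j j' : Fin n} (hj' : j'.val = j.val + 1)
    (hm : j'.val < m) : #{i | A i j ≠ 0} + #{i | A i j' ≠ 0} ≤ 2 * m - 1 := by
  have hle (l : Fin n) : #{i | A i l ≠ 0} ≤ m := (card_filter_le _ _).trans_eq (card_fin m)
  have hfull (l : Fin n) (hl : #{i | A i l ≠ 0} = m) (i : Fin m) : A i l ≠ 0 :=
    card_filter_eq_iff.1 (hl.trans (card_fin m).symm) i (mem_univ i)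
  -- otherwise both columns are free of zeros, so every odd row has `-1` in both of them
  by_contra! hlt
  have := hle j
  have := hle j'
  have hodd : ∀ i ∈ ({i | i.val % 2 = 1} : Finset (Fin m)), 2 ≤ ∑ l ∈ Iio j, A i l := by
    intro i hi
    have hi := (mem_filter.1 hi).2
    have := hA.one_le_sum_Iio_row (hA.eq_neg_one_of_col_ne_zero (hfull j' (by omega)) hi)
    rw [Fin.Iio_eq_Iic_of_val_eq_succ hj', ← Iio_insert, sum_insert notMem_Iio_self,
      hA.eq_neg_one_of_col_ne_zero (hfull j (by omega)) hi] at this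
    omega
  have := hA.mul_card_le_of_le_sum_Iio j _ 2 hodd
  rw [Fin.card_filter_val_mod_two_eq_one] at this
  omega

end IsSRM

/-- Column counts of the extremal matrix `srmMatrix n`: `2 * j + 1` left of the middle, then
alternately `n` and `n - 1`. -/
def optimalColCount (n j : ℕ) : ℕ := if j < n / 2 then 2 * j + 1 else n - (j + n / 2) % 2

theorem sum_range_optimalColCount (n : ℕ) :
    ∑ j ∈ range n, optimalColCount n j =
      if n % 4 = 0 ∨ n % 4 = 3 then (3 * n ^ 2 - n) / 4 else (3 * n ^ 2 - n + 2) / 4 := by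
  obtain ⟨h, s, hs, rfl⟩ : ∃ h s, s < 2 ∧ n = 2 * h + s := ⟨n / 2, n % 2, by omega, by omega⟩
  have hh : (2 * h + s) / 2 = h := by omega
  have hsplit := sum_range_add (optimalColCount (2 * h + s)) h (h + s)
  rw [show h + (h + s) = 2 * h + s by ring] at hsplit
  have hhead : ∑ j ∈ range h, optimalColCount (2 * h + s) j = h ^ 2 := by
    rw [← Nat.sum_range_two_mul_add_one]
    exact sum_congr rfl fun j hj => if_pos (by have := mem_range.1 hj; omega)
  have htail : ∑ k ∈ range (h + s), optimalColCount (2 * h + s) (h + k) + (h + s) / 2 =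
      (h + s) * (2 * h + s) := by
    rw [← Nat.sum_range_mod_two, ← sum_add_distrib]
    calc _ = ∑ _k ∈ range (h + s), (2 * h + s) := sum_congr rfl fun k hk => by
          have := mem_range.1 hk
          unfold optimalColCount
          rw [hh, if_neg (by omega)]
          omega
      _ = _ := by simp
  have hsq : (2 * h + s) ^ 2 = 4 * h ^ 2 + 4 * (h * s) + s := by
    interval_cases s <;> ring
  have hprod : (h + s) * (2 * h + s) = 2 * h ^ 2 + 3 * (h * s) + s := by
    interval_cases s <;> ring
  rw [hsplit, hhead]
  split_ifs <;> omega

theorem sum_range_le_sum_range_optimalColCount {n : ℕ} (c : ℕ → ℕ) (hle : ∀ j < n, c j ≤ n)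
    (hle_odd : ∀ j < n, c j ≤ 2 * j + 1) (hpair : ∀ j, j + 1 < n → c j + c (j + 1) ≤ 2 * n - 1) :
    ∑ j ∈ range n, c j ≤ ∑ j ∈ range n, optimalColCount n j := by
  -- single columns up to `n / 2` (one more if needed for parity), then consecutive pairs
  refine sum_range_le_sum_range_of_pairs (a := n / 2 + (n - n / 2) % 2) (p := (n - n / 2) / 2)
    (by omega) (fun j hj => ?_) (fun k hk => ?_)
  · have := hle j (by omega)
    have := hle_odd j (by omega)
    unfold optimalColCount
    split_ifs <;> omega
  · have := hpair _ (by omega : n / 2 + (n - n / 2) % 2 + 2 * k + 1 < n)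
    unfold optimalColCount
    split_ifs <;> omega

theorem IsSRM.card_ne_zero_le {n : ℕ} {A : Matrix (Fin n) (Fin n) ℤ} (hA : IsSRM A) :
    #{p : Fin n × Fin n | A p.1 p.2 ≠ 0} ≤ ∑ j ∈ range n, optimalColCount n j := by
  let c (j : ℕ) : ℕ := if hj : j < n then #{i | A i ⟨j, hj⟩ ≠ 0} else 0
  have hc (j : Fin n) : c j = #{i | A i j ≠ 0} := dif_pos j.isLt
  calc #{p : Fin n × Fin n | A p.1 p.2 ≠ 0} = ∑ j ∈ range n, c j := by
        rw [Matrix.card_ne_zero_eq_sum_card_col, ← Fin.sum_univ_eq_sum_range]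
        simp only [hc]
    _ ≤ _ := sum_range_le_sum_range_optimalColCount c
      (fun j hj => hc ⟨j, hj⟩ ▸ (card_filter_le _ _).trans_eq (card_fin n))
      (fun j hj => hc ⟨j, hj⟩ ▸ hA.card_col_ne_zero_le ⟨j, hj⟩)
      (fun j hj => hc ⟨j, by omega⟩ ▸ hc ⟨j + 1, hj⟩ ▸ hA.card_col_add_card_col_le rfl hj)

def altBlock (b e k : ℕ) : ℤ := if b ≤ k ∧ k ≤ e then (if (k - b) % 2 = 0 then 1 else -1) else 0

theorem sum_range_altBlock (b e t : ℕ) :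
    ∑ k ∈ range t, altBlock b e k = ((min t (e + 1) - b) % 2 : ℕ) := by
  induction t with
  | zero => simp
  | succ t ih =>
    rw [sum_range_succ, ih]
    unfold altBlock
    split_ifs <;> push_cast <;> omega

/-- The checkerboard `±1` pattern on the cone `|i - h| ≤ j`, with the `-1` entries of the top
row replaced by `0`. -/
def srmEntry (h i j : ℕ) : ℤ :=
  if h ≤ i + j ∧ i ≤ h + j then (if (i + j + h) % 2 = 0 then 1 else if i = 0 then 0 else -1)
  else 0

theorem srmEntry_eq_altBlock_of_col (h k j : ℕ) :
    srmEntry h k j = altBlock (if h ≤ j then (j + h) % 2 else h - j) (h + j) k := by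
  unfold srmEntry altBlock
  split_ifs <;> omega

theorem srmEntry_eq_altBlock_of_row {h i k e : ℕ} (hi : i ≠ 0) (hk : k ≤ e) :
    srmEntry h i k = altBlock (h - i + (i - h)) e k := by
  unfold srmEntry altBlock
  split_ifs <;> omega

theorem srmEntry_zero_nonneg (h k : ℕ) : 0 ≤ srmEntry h 0 k := by
  unfold srmEntry
  split_ifs <;> omega

def srmMatrix (n : ℕ) : Matrix (Fin n) (Fin n) ℤ := Matrix.of fun i j => srmEntry (n / 2) i j

theorem srmMatrix_apply {n : ℕ} (i j : Fin n) : srmMatrix n i j = srmEntry (n / 2) i j := rfl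

theorem isSRM_srmMatrix (n : ℕ) : IsSRM (srmMatrix n) := by
  simp only [IsSRM, srmMatrix_apply]
  refine ⟨fun i j => ?_, fun i j => ?_, fun i j => ?_⟩
  · unfold srmEntry
    split_ifs <;> simp
  · rw [Fin.sum_Iic_eq_sum_range (srmEntry (n / 2) · j)]
    simp only [srmEntry_eq_altBlock_of_col, sum_range_altBlock]
    omega
  · rw [Fin.sum_Iic_eq_sum_range (srmEntry (n / 2) i ·)]
    by_cases hi : i.val = 0
    · rw [hi]
      exact sum_nonneg fun k _ => srmEntry_zero_nonneg _ _
    · rw [sum_congr rfl fun k hk =>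
          srmEntry_eq_altBlock_of_row hi (Nat.lt_succ_iff.1 (mem_range.1 hk)), sum_range_altBlock]
      positivity

theorem card_srmMatrix_col {n : ℕ} (j : Fin n) :
    #{i | srmMatrix n i j ≠ 0} = optimalColCount n j := by
  calc #{i | srmMatrix n i j ≠ 0} = #{k ∈ range n | srmEntry (n / 2) k j ≠ 0} :=
        Fin.card_filter_univ_val (srmEntry (n / 2) · j ≠ 0)
    _ = #(Ico (if n / 2 ≤ j then (j + n / 2) % 2 else n / 2 - j) (min n (n / 2 + j + 1))) := by
        congr 1
        ext k
        simp only [mem_filter, mem_range, mem_Ico, srmEntry_eq_altBlock_of_col, altBlock]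
        split_ifs <;> omega
    _ = optimalColCount n j := by
        rw [Nat.card_Ico]
        unfold optimalColCount
        split_ifs <;> omega

theorem card_srmMatrix_ne_zero (n : ℕ) :
    #{p : Fin n × Fin n | srmMatrix n p.1 p.2 ≠ 0} = ∑ j ∈ range n, optimalColCount n j := by
  rw [Matrix.card_ne_zero_eq_sum_card_col, ← Fin.sum_univ_eq_sum_range]
  exact sum_congr rfl fun j _ => card_srmMatrix_col j

/-- the maximum number of nonzero entries in an n×n SRM. -/
theorem stmt5 (n : ℕ) :
    IsGreatest {k : ℕ | ∃ A : Matrix (Fin n) (Fin n) ℤ, IsSRM A ∧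
        (Finset.univ.filter (fun p : Fin n × Fin n => A p.1 p.2 ≠ 0)).card = k}
      (if n % 4 = 0 ∨ n % 4 = 3 then (3 * n ^ 2 - n) / 4 else (3 * n ^ 2 - n + 2) / 4) := by
  rw [← sum_range_optimalColCount]
  refine ⟨⟨srmMatrix n, isSRM_srmMatrix n, card_srmMatrix_ne_zero n⟩, ?_⟩
  rintro k ⟨A, hA, rfl⟩
  exact hA.card_ne_zero_le
end

section
/- Let c be a nonnegative integer. The convex hull of the m × n integral matrices A = [a_{ij}] satisfying: 0 ≤ Σ_{l=1}^j a_{il} for all i,j; 0 ≤ Σ_{k=1}^i a_{kj} ≤ 1 for all i,j; and Σ_{j=1}^n a_{ij} ≤ c for all i, equals the set of all real m × n matrices satisfying the same linear inequalities. -/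
/-!
Write `Σ(A)(p, q) = ∑_{k < p, l < q} A k l` on the grid `Fin (m + 1) × Fin (n + 1)`. Every
constraint on `A` says that a difference `Σ(A) x - Σ(A) y` of two grid values is bounded by an
integer, and `A ↦ Σ(A)` is a linear bijection onto the grid functions vanishing on the boundary,
integral exactly on integral matrices. So it suffices to round a real solution `φ` of a system of
difference constraints `φ x - φ y ≤ b`, `b ∈ ℤ`. Let `f` be the largest fractional part of `φ` and
`f'` the next one (or `0`). Shifting the coordinates with fractional part `f` by `1 - f` or by
`f' - f` keeps every constraint, since the bounds are integers and no other fractional part lies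
in `(f', f)`; both shifts lose the fractional part `f`, and `φ` lies on the segment between them.
Induct on the number of fractional parts.
-/

open Finset

theorem mem_segment_add_smul {E : Type*} [AddCommGroup E] [Module ℝ E] (x d : E) {a b : ℝ}
    (ha : a < 0) (hb : 0 < b) : x ∈ segment ℝ (x + a • d) (x + b • d) := by
  have hba : 0 < b - a := by linarith
  have hsum : b / (b - a) + -a / (b - a) = 1 := by field_simp; ring
  have hdir : b / (b - a) * a + -a / (b - a) * b = 0 := by field_simp; ring
  refine ⟨b / (b - a), -a / (b - a), by positivity, div_nonneg (by linarith) hba.le, hsum, ?_⟩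
  rw [smul_add, smul_add, add_add_add_comm, ← add_smul, smul_smul, smul_smul, ← add_smul,
    hsum, hdir, one_smul, zero_smul, add_zero]

section DifferenceConstraints

variable {V : Type*}

def differencePolyhedron (K : Set (V × V × ℤ)) (Z : Set V) : Set (V → ℝ) :=
  {φ | (∀ v ∈ Z, φ v = 0) ∧ ∀ e ∈ K, φ e.1 - φ e.2.1 ≤ e.2.2}

theorem convex_differencePolyhedron (K : Set (V × V × ℤ)) (Z : Set V) :
    Convex ℝ (differencePolyhedron K Z) := by
  rintro φ ⟨hφZ, hφK⟩ ψ ⟨hψZ, hψK⟩ a b ha hb hab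
  refine ⟨fun v hv => by simp [hφZ v hv, hψZ v hv], fun e he => ?_⟩
  have h := add_le_add (mul_le_mul_of_nonneg_left (hφK e he) ha)
    (mul_le_mul_of_nonneg_left (hψK e he) hb)
  simp only [Pi.add_apply, Pi.smul_apply, smul_eq_mul]
  linear_combination h + (e.2.2 : ℝ) * hab

theorem add_sub_le_of_fract_lt {x y t : ℝ} {b : ℤ} (h : x - y ≤ b)
    (hyx : Int.fract y < Int.fract x) (ht : t ≤ 1 - Int.fract x) : x + t - y ≤ b := by
  have hfl : ⌊x⌋ - ⌊y⌋ < b := by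
    have := Int.fract_nonneg y
    rw [← Int.self_sub_floor, ← Int.self_sub_floor] at hyx
    exact_mod_cast (show ((⌊x⌋ - ⌊y⌋ : ℤ) : ℝ) < b by push_cast; linarith)
  have : ((⌊x⌋ - ⌊y⌋ : ℤ) : ℝ) ≤ b - 1 := by exact_mod_cast Int.le_sub_one_of_lt hfl
  push_cast at this
  linarith [Int.floor_add_fract x, Int.floor_add_fract y, Int.fract_nonneg y]

theorem sub_add_le_of_fract_sub_le {x y t : ℝ} {b : ℤ} (h : x - y ≤ b)
    (ht : Int.fract x - Int.fract y ≤ t) : x - (y + t) ≤ b := by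
  have hfl : ⌊x⌋ - ⌊y⌋ < b + 1 := by
    have := Int.fract_nonneg x
    have := Int.fract_lt_one y
    exact_mod_cast (show ((⌊x⌋ - ⌊y⌋ : ℤ) : ℝ) < b + 1 by
      push_cast; linarith [Int.floor_add_fract x, Int.floor_add_fract y])
  have : ((⌊x⌋ - ⌊y⌋ : ℤ) : ℝ) ≤ b := by exact_mod_cast Int.lt_add_one_iff.mp hfl
  push_cast at this
  linarith [Int.floor_add_fract x, Int.floor_add_fract y]

noncomputable def fractLevel (φ : V → ℝ) (f : ℝ) : V → ℝ :=
  {v | Int.fract (φ v) = f}.indicator 1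

theorem add_smul_fractLevel_mem_differencePolyhedron {K : Set (V × V × ℤ)} {Z : Set V}
    {φ : V → ℝ} {f f' t : ℝ} (hφ : φ ∈ differencePolyhedron K Z) (hf' : 0 ≤ f')
    (hf'f : f' < f) (hgap : ∀ v, Int.fract (φ v) = f ∨ Int.fract (φ v) ≤ f')
    (ht₁ : f' - f ≤ t) (ht₂ : t ≤ 1 - f) :
    φ + t • fractLevel φ f ∈ differencePolyhedron K Z := by
  refine ⟨fun v hv => ?_, fun ⟨x, y, b⟩ he => ?_⟩
  · simp [fractLevel, hφ.1 v hv, (hf'.trans_lt hf'f).ne]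
  have h := hφ.2 _ he
  simp only [fractLevel, Pi.add_apply, Pi.smul_apply, Set.indicator_apply, Set.mem_ofPred_eq,
    Pi.one_apply, smul_eq_mul] at h ⊢
  split_ifs with hx hy hy
  · linarith
  · have hy' : Int.fract (φ y) < f := ((hgap y).resolve_left hy).trans_lt hf'f
    rw [mul_one, mul_zero, add_zero]
    exact add_sub_le_of_fract_lt h (hx ▸ hy') (hx ▸ ht₂)
  · rw [mul_one, mul_zero, add_zero]
    exact sub_add_le_of_fract_sub_le h (by linarith [(hgap x).resolve_left hx])
  · linarith

variable [Fintype V]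

noncomputable def fractSet (φ : V → ℝ) : Finset ℝ :=
  insert 0 (univ.image fun v => Int.fract (φ v))

theorem zero_mem_fractSet (φ : V → ℝ) : 0 ∈ fractSet φ := mem_insert_self _ _

theorem fract_mem_fractSet (φ : V → ℝ) (v : V) : Int.fract (φ v) ∈ fractSet φ :=
  mem_insert_of_mem (mem_image_of_mem _ (mem_univ v))

theorem mem_Ico_of_mem_fractSet {φ : V → ℝ} {z : ℝ} (hz : z ∈ fractSet φ) : z ∈ Set.Ico 0 1 := by
  rcases mem_insert.1 hz with rfl | hz
  · simp
  · obtain ⟨v, -, rfl⟩ := mem_image.1 hz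
    exact ⟨Int.fract_nonneg _, Int.fract_lt_one _⟩

theorem fractSet_add_smul_fractLevel_subset {φ : V → ℝ} {f t : ℝ} (hf : f ≠ 0)
    (ht : Int.fract (f + t) ∈ (fractSet φ).erase f) :
    fractSet (φ + t • fractLevel φ f) ⊆ (fractSet φ).erase f := by
  intro z hz
  rcases mem_insert.1 hz with rfl | hz
  · exact mem_erase.2 ⟨hf.symm, zero_mem_fractSet φ⟩
  obtain ⟨v, -, rfl⟩ := mem_image.1 hz
  by_cases hv : Int.fract (φ v) = f
  · have : φ v + t = ⌊φ v⌋ + (f + t) := by linarith [Int.floor_add_fract (φ v)]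
    simpa [fractLevel, hv, this, Int.fract_intCast_add] using ht
  · simpa [fractLevel, hv] using mem_erase.2 ⟨hv, fract_mem_fractSet φ v⟩

theorem exists_intCast_of_card_fractSet_le_one {φ : V → ℝ} (h : (fractSet φ).card ≤ 1) (v : V) :
    ∃ z : ℤ, φ v = z :=
  have := card_le_one.1 h _ (fract_mem_fractSet φ v) _ (zero_mem_fractSet φ)
  (Int.fract_eq_zero_iff.1 this).imp fun _ h => h.symm

theorem mem_convexHull_integral_of_mem_differencePolyhedron {K : Set (V × V × ℤ)} {Z : Set V}
    {φ : V → ℝ} (hφ : φ ∈ differencePolyhedron K Z) :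
    φ ∈ convexHull ℝ {ψ ∈ differencePolyhedron K Z | ∀ v, ∃ z : ℤ, ψ v = z} := by
  induction hN : (fractSet φ).card using Nat.strong_induction_on generalizing φ with
  | _ N ih =>
  rcases le_or_gt N 1 with hN1 | hN1
  · exact subset_convexHull ℝ _
      ⟨hφ, exists_intCast_of_card_fractSet_le_one (hN ▸ hN1)⟩
  set f := (fractSet φ).max' ⟨0, zero_mem_fractSet φ⟩
  have hfmem : f ∈ fractSet φ := max'_mem _ _
  have hne : ((fractSet φ).erase f).Nonempty := by
    rw [← card_pos, card_erase_of_mem hfmem]; omega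
  set f' := ((fractSet φ).erase f).max' hne
  have hf'mem : f' ∈ (fractSet φ).erase f := max'_mem _ _
  have hf' : 0 ≤ f' := (mem_Ico_of_mem_fractSet (mem_of_mem_erase hf'mem)).1
  have hf1 : f < 1 := (mem_Ico_of_mem_fractSet hfmem).2
  have hf'f : f' < f := lt_of_le_of_ne (le_max' _ _ (mem_of_mem_erase hf'mem))
    (ne_of_mem_erase hf'mem)
  have hgap : ∀ v, Int.fract (φ v) = f ∨ Int.fract (φ v) ≤ f' := fun v =>
    or_iff_not_imp_left.2 fun hv => le_max' _ _ (mem_erase.2 ⟨hv, fract_mem_fractSet φ v⟩)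
  have hround : ∀ t, f' - f ≤ t → t ≤ 1 - f → Int.fract (f + t) ∈ (fractSet φ).erase f →
      φ + t • fractLevel φ f ∈
        convexHull ℝ {ψ ∈ differencePolyhedron K Z | ∀ v, ∃ z : ℤ, ψ v = z} := by
    intro t ht₁ ht₂ ht
    refine ih _ ?_ (add_smul_fractLevel_mem_differencePolyhedron hφ hf' hf'f hgap ht₁ ht₂) rfl
    calc (fractSet (φ + t • fractLevel φ f)).card
        ≤ ((fractSet φ).erase f).card :=
          card_le_card (fractSet_add_smul_fractLevel_subset (hf'.trans_lt hf'f).ne' ht)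
      _ < N := hN ▸ card_erase_lt_of_mem hfmem
  refine (convex_convexHull ℝ _).segment_subset (hround (f' - f) le_rfl (by linarith) ?_)
    (hround (1 - f) (by linarith) le_rfl ?_) (mem_segment_add_smul φ _ (by linarith) (by linarith))
  · rwa [add_sub_cancel, Int.fract_eq_self.2 ⟨hf', hf'f.trans hf1⟩]
  · rw [add_sub_cancel, Int.fract_one]
    exact mem_erase.2 ⟨(hf'.trans_lt hf'f).ne, zero_mem_fractSet φ⟩

end DifferenceConstraints

section PrefixSum

variable {M : Type*} [AddCommMonoid M] {n : ℕ}

def prefixSum (g : Fin n → M) (q : Fin (n + 1)) : M :=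
  ∑ l with l.castSucc < q, g l

@[simp] theorem prefixSum_zero (g : Fin n → M) : prefixSum g 0 = 0 := by
  simp [prefixSum]

theorem prefixSum_succ_eq_sum_Iic (g : Fin n → M) (j : Fin n) :
    prefixSum g j.succ = ∑ l ∈ Iic j, g l :=
  sum_congr (by ext l; simp) fun _ _ => rfl

theorem prefixSum_castSucc_eq_sum_Iio (g : Fin n → M) (j : Fin n) :
    prefixSum g j.castSucc = ∑ l ∈ Iio j, g l :=
  sum_congr (by ext l; simp) fun _ _ => rfl

theorem prefixSum_last (g : Fin n → M) : prefixSum g (Fin.last n) = ∑ l, g l := by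
  simp [prefixSum]

theorem prefixSum_succ (g : Fin n → M) (j : Fin n) :
    prefixSum g j.succ = prefixSum g j.castSucc + g j := by
  rw [prefixSum_succ_eq_sum_Iic, prefixSum_castSucc_eq_sum_Iio, ← Iio_insert,
    sum_insert notMem_Iio_self, add_comm]

end PrefixSum

section Grid

variable {m n : ℕ}

def gridSum : Matrix (Fin m) (Fin n) ℝ →ₗ[ℝ] (Fin (m + 1) × Fin (n + 1) → ℝ) where
  toFun A p := prefixSum (fun k => prefixSum (A k) p.2) p.1
  map_add' A B := by ext p; simp [prefixSum, sum_add_distrib]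
  map_smul' a A := by ext p; simp [prefixSum, mul_sum]

def gridDiff : (Fin (m + 1) × Fin (n + 1) → ℝ) →ₗ[ℝ] Matrix (Fin m) (Fin n) ℝ where
  toFun ψ := Matrix.of fun i j => ψ (i.succ, j.succ) - ψ (i.castSucc, j.succ)
    - ψ (i.succ, j.castSucc) + ψ (i.castSucc, j.castSucc)
  map_add' ψ χ := by ext i j; simp only [Matrix.of_apply, Pi.add_apply, Matrix.add_apply]; ring
  map_smul' a ψ := by
    ext i j; simp only [Matrix.of_apply, Pi.smul_apply, Matrix.smul_apply, smul_eq_mul,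
      RingHom.id_apply]; ring

theorem gridDiff_apply (ψ : Fin (m + 1) × Fin (n + 1) → ℝ) (i : Fin m) (j : Fin n) :
    gridDiff ψ i j = ψ (i.succ, j.succ) - ψ (i.castSucc, j.succ) - ψ (i.succ, j.castSucc)
      + ψ (i.castSucc, j.castSucc) := rfl

theorem gridSum_apply (A : Matrix (Fin m) (Fin n) ℝ) (p : Fin (m + 1)) (q : Fin (n + 1)) :
    gridSum A (p, q) = prefixSum (fun k => prefixSum (A k) q) p := rfl

theorem gridSum_zero_left (A : Matrix (Fin m) (Fin n) ℝ) (q : Fin (n + 1)) :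
    gridSum A (0, q) = 0 := prefixSum_zero _

theorem gridSum_zero_right (A : Matrix (Fin m) (Fin n) ℝ) (p : Fin (m + 1)) :
    gridSum A (p, 0) = 0 := by
  simp [gridSum_apply, prefixSum]

theorem gridSum_succ_left_sub (A : Matrix (Fin m) (Fin n) ℝ) (i : Fin m) (q : Fin (n + 1)) :
    gridSum A (i.succ, q) - gridSum A (i.castSucc, q) = prefixSum (A i) q := by
  rw [gridSum_apply, gridSum_apply, prefixSum_succ, add_sub_cancel_left]

theorem gridSum_succ_right_sub (A : Matrix (Fin m) (Fin n) ℝ) (p : Fin (m + 1)) (j : Fin n) :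
    gridSum A (p, j.succ) - gridSum A (p, j.castSucc) = prefixSum (fun k => A k j) p := by
  simp only [gridSum_apply, prefixSum_succ]
  rw [prefixSum, prefixSum, prefixSum, sum_add_distrib, add_sub_cancel_left]

theorem gridDiff_gridSum (A : Matrix (Fin m) (Fin n) ℝ) : gridDiff (gridSum A) = A := by
  ext i j
  have hsucc := gridSum_succ_left_sub A i j.succ
  have hcast := gridSum_succ_left_sub A i j.castSucc
  rw [prefixSum_succ] at hsucc
  rw [gridDiff_apply]
  linarith

theorem eq_zero_of_gridDiff_eq_zero {D : Fin (m + 1) × Fin (n + 1) → ℝ}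
    (hleft : ∀ q, D (0, q) = 0) (hright : ∀ p, D (p, 0) = 0) (hD : gridDiff D = 0) : D = 0 := by
  have hrow : ∀ (i : Fin m) q, D (i.succ, q) = D (i.castSucc, q) := by
    intro i q
    induction q using Fin.induction with
    | zero => rw [hright, hright]
    | succ j ih =>
      have := congrFun (congrFun hD i) j
      rw [gridDiff_apply, Matrix.zero_apply] at this
      linarith
  ext ⟨p, q⟩
  induction p using Fin.induction with
  | zero => exact hleft q
  | succ i ih => rw [hrow]; exact ih

theorem gridSum_gridDiff {ψ : Fin (m + 1) × Fin (n + 1) → ℝ} (hleft : ∀ q, ψ (0, q) = 0)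
    (hright : ∀ p, ψ (p, 0) = 0) : gridSum (gridDiff ψ) = ψ := by
  refine sub_eq_zero.1 (eq_zero_of_gridDiff_eq_zero ?_ ?_ ?_)
  · simp [gridSum_zero_left, hleft]
  · simp [gridSum_zero_right, hright]
  · rw [map_sub, gridDiff_gridSum, sub_self]

theorem exists_intCast_gridDiff {ψ : Fin (m + 1) × Fin (n + 1) → ℝ}
    (hψ : ∀ v, ∃ z : ℤ, ψ v = z) (i : Fin m) (j : Fin n) : ∃ z : ℤ, gridDiff ψ i j = z := by
  obtain ⟨a, ha⟩ := hψ (i.succ, j.succ)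
  obtain ⟨b, hb⟩ := hψ (i.castSucc, j.succ)
  obtain ⟨c, hc⟩ := hψ (i.succ, j.castSucc)
  obtain ⟨d, hd⟩ := hψ (i.castSucc, j.castSucc)
  exact ⟨a - b - c + d, by rw [gridDiff_apply, ha, hb, hc, hd]; push_cast; ring⟩

end Grid

section SRM

variable {m n : ℕ}

def gridBoundary (m n : ℕ) : Set (Fin (m + 1) × Fin (n + 1)) := {v | v.1 = 0 ∨ v.2 = 0}

def srmPolytope (m n c : ℕ) : Set (Matrix (Fin m) (Fin n) ℝ) :=
  {A | (∀ i j, 0 ≤ ∑ l ∈ Finset.Iic j, A i l) ∧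
    (∀ i j, 0 ≤ ∑ k ∈ Finset.Iic i, A k j ∧ ∑ k ∈ Finset.Iic i, A k j ≤ 1) ∧
    (∀ i, ∑ j, A i j ≤ (c : ℝ))}

/-- The defining inequalities of `srmPolytope` read through `gridSum`: row prefix sums `≥ 0`,
column prefix sums `≥ 0` and `≤ 1`, row sums `≤ c`. -/
def srmConstraints (m n c : ℕ) :
    Set ((Fin (m + 1) × Fin (n + 1)) × (Fin (m + 1) × Fin (n + 1)) × ℤ) :=
  Set.range (fun p : Fin m × Fin n => ((p.1.castSucc, p.2.succ), (p.1.succ, p.2.succ), 0)) ∪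
  Set.range (fun p : Fin m × Fin n => ((p.1.succ, p.2.castSucc), (p.1.succ, p.2.succ), 0)) ∪
  Set.range (fun p : Fin m × Fin n => ((p.1.succ, p.2.succ), (p.1.succ, p.2.castSucc), 1)) ∪
  Set.range (fun i : Fin m => ((i.succ, Fin.last n), (i.castSucc, Fin.last n), (c : ℤ)))

theorem gridSum_mem_differencePolyhedron_iff (c : ℕ) (A : Matrix (Fin m) (Fin n) ℝ) :
    gridSum A ∈ differencePolyhedron (srmConstraints m n c) (gridBoundary m n) ↔
      A ∈ srmPolytope m n c := by
  have hrow (i : Fin m) (j : Fin n) : ∑ l ∈ Iic j, A i l =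
      gridSum A (i.succ, j.succ) - gridSum A (i.castSucc, j.succ) := by
    rw [gridSum_succ_left_sub, prefixSum_succ_eq_sum_Iic]
  have hcol (i : Fin m) (j : Fin n) : ∑ k ∈ Iic i, A k j =
      gridSum A (i.succ, j.succ) - gridSum A (i.succ, j.castSucc) := by
    rw [gridSum_succ_right_sub, prefixSum_succ_eq_sum_Iic]
  have htot (i : Fin m) : ∑ j, A i j =
      gridSum A (i.succ, Fin.last n) - gridSum A (i.castSucc, Fin.last n) := by
    rw [gridSum_succ_left_sub, prefixSum_last]
  have hbdry : ∀ v ∈ gridBoundary m n, gridSum A v = 0 := by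
    rintro ⟨p, q⟩ (rfl | rfl)
    exacts [gridSum_zero_left A q, gridSum_zero_right A p]
  rw [differencePolyhedron, Set.mem_ofPred_eq, and_iff_right hbdry]
  simp only [srmPolytope, srmConstraints, Set.mem_ofPred_eq, Set.mem_union, or_imp, forall_and,
    Set.forall_mem_range, Prod.forall, hrow, hcol, htot, sub_nonpos, sub_nonneg, and_assoc,
    Int.cast_zero, Int.cast_one, Int.cast_natCast]

end SRM

/-- the convex hull of the integral matrices satisfying the c-SRM
inequalities equals the set of all real matrices satisfying those inequalities. -/
theorem stmt18 (m n : ℕ) (c : ℕ) :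
    convexHull ℝ {A : Matrix (Fin m) (Fin n) ℝ |
        (∀ i j, ∃ z : ℤ, A i j = (z : ℝ)) ∧
        (∀ i j, 0 ≤ ∑ l ∈ Finset.Iic j, A i l) ∧
        (∀ i j, 0 ≤ ∑ k ∈ Finset.Iic i, A k j ∧ ∑ k ∈ Finset.Iic i, A k j ≤ 1) ∧
        (∀ i, ∑ j, A i j ≤ (c : ℝ))} =
      {A : Matrix (Fin m) (Fin n) ℝ |
        (∀ i j, 0 ≤ ∑ l ∈ Finset.Iic j, A i l) ∧
        (∀ i j, 0 ≤ ∑ k ∈ Finset.Iic i, A k j ∧ ∑ k ∈ Finset.Iic i, A k j ≤ 1) ∧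
        (∀ i, ∑ j, A i j ≤ (c : ℝ))} := by
  change convexHull ℝ {A | (∀ i j, ∃ z : ℤ, A i j = (z : ℝ)) ∧ A ∈ srmPolytope m n c} =
    srmPolytope m n c
  have hpre : srmPolytope m n c =
      gridSum ⁻¹' differencePolyhedron (srmConstraints m n c) (gridBoundary m n) :=
    Set.ext fun A => (gridSum_mem_differencePolyhedron_iff c A).symm
  refine (convexHull_min (fun A hA => hA.2) ?_).antisymm fun A hA => ?_
  · rw [hpre]
    exact (convex_differencePolyhedron _ _).linear_preimage gridSum
  have hA' := mem_convexHull_integral_of_mem_differencePolyhedron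
    ((gridSum_mem_differencePolyhedron_iff c A).2 hA)
  rw [← gridDiff_gridSum A]
  refine convexHull_mono ?_ (gridDiff.image_convexHull _ ▸ Set.mem_image_of_mem gridDiff hA')
  rintro _ ⟨ψ, ⟨hψ, hψℤ⟩, rfl⟩
  have hψ' : gridSum (gridDiff ψ) = ψ :=
    gridSum_gridDiff (fun q => hψ.1 _ (Or.inl rfl)) (fun p => hψ.1 _ (Or.inr rfl))
  exact ⟨exists_intCast_gridDiff hψℤ, (gridSum_mem_differencePolyhedron_iff c _).1 (hψ'.symm ▸ hψ)⟩
end
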